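/- arXiv:2210.17550 — 2 statements merged into one kernel-verified Lean document; each statement's English description precedes it below -/
import Mathlib

section
/- Let F : ℝⁿ → ℝ be convex, differentiable, and L-smooth (i.e., its gradient is L-Lipschitz). Let H : ℝⁿ → ℝⁿ be monotone, i.e., ⟨H(z) - H(z'), z - z'⟩ ≥ 0 for all z, z'. Fix α ∈ (0,1] and points z_ag, z_md, z_half, z_k, w with z_md = (1-α) z_ag + α z_k and define z_ag' = (1-α) z_ag + α z_half. Define the gap function V(z, w) = F(z) - F(w) + ⟨H(w), z - w⟩. Then V(z_ag', w) - (1-α) V(z_ag, w) ≤ α ⟨∇F(z_md) + H(z_half), z_half - w⟩ + (L α²/2)‖z_half - z_k‖². -/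
/-!
Linearize `F` at `z_md`. The descent lemma bounds `F(z_ag')` from above by the linearization at
`z_md` plus `(L/2)‖z_ag' - z_md‖² = (L α²/2)‖z_half - z_k‖²`, while convexity bounds the
combination `(1-α) F(z_ag) + α F(w)` from below by the same linearization; since
`z_md = (1-α) z_ag + α z_k`, the linear terms collapse to `α ⟨∇F(z_md), z_half - w⟩`.
The `H`-part of the gap is affine in its first argument, so it contributes `α ⟨H(w), z_half - w⟩`,
and monotonicity of `H` replaces `H(w)` by `H(z_half)`.
-/

open RealInnerProductSpace

variable {E : Type*} [NormedAddCommGroup E] [InnerProductSpace ℝ E]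

lemma inner_gradient_add_smul_sub_le {gradF : E → E} {L : ℝ}
    (hsmooth : ∀ x y, ‖gradF x - gradF y‖ ≤ L * ‖x - y‖) (x v : E) {t : ℝ} (ht : 0 ≤ t) :
    ⟪gradF (x + t • v) - gradF x, v⟫ ≤ L * t * ‖v‖ ^ 2 :=
  calc ⟪gradF (x + t • v) - gradF x, v⟫
      ≤ ‖gradF (x + t • v) - gradF x‖ * ‖v‖ := real_inner_le_norm _ _
    _ ≤ L * ‖x + t • v - x‖ * ‖v‖ := by gcongr; exact hsmooth _ _
    _ = L * t * ‖v‖ ^ 2 := by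
      rw [add_sub_cancel_left, norm_smul, Real.norm_eq_abs, abs_of_nonneg ht]; ring

variable [CompleteSpace E]

lemma HasGradientAt.hasDerivAt_comp_add_smul {F : E → ℝ} {g x v : E} {t : ℝ}
    (hF : HasGradientAt F g (x + t • v)) :
    HasDerivAt (fun s : ℝ => F (x + s • v)) ⟪g, v⟫ t := by
  have hline : HasDerivAt (fun s : ℝ => x + s • v) v t := by
    simpa using ((hasDerivAt_id t).smul_const v).const_add x
  have h := (hasGradientAt_iff_hasFDerivAt.mp hF).comp_hasDerivAt t hline
  simp only [InnerProductSpace.toDual_apply_apply] at h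
  exact h

lemma ConvexOn.add_inner_gradient_le {F : E → ℝ} {g x : E} (hconv : ConvexOn ℝ Set.univ F)
    (hF : HasGradientAt F g x) (y : E) :
    F x + ⟪g, y - x⟫ ≤ F y := by
  have hline : ConvexOn ℝ Set.univ (fun s : ℝ => F (x + s • (y - x))) := by
    simpa [Function.comp_def, AffineMap.lineMap_apply, add_comm] using
      hconv.comp_affineMap (AffineMap.lineMap x y : ℝ →ᵃ[ℝ] E)
  have hderiv : HasDerivAt (fun s : ℝ => F (x + s • (y - x))) ⟪g, y - x⟫ 0 :=
    HasGradientAt.hasDerivAt_comp_add_smul (by simpa using hF)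
  have hslope := hline.le_slope_of_hasDerivAt (Set.mem_univ 0) (Set.mem_univ 1) one_pos hderiv
  simp only [slope_def_field, one_smul, add_sub_cancel, zero_smul, add_zero, sub_zero,
    div_one] at hslope
  linarith

/-- The descent lemma. -/
lemma le_add_inner_gradient_add_sq {F : E → ℝ} {gradF : E → E} {L : ℝ}
    (hdiff : ∀ x, HasGradientAt F (gradF x) x)
    (hsmooth : ∀ x y, ‖gradF x - gradF y‖ ≤ L * ‖x - y‖) (x y : E) :
    F y ≤ F x + ⟪gradF x, y - x⟫ + L / 2 * ‖y - x‖ ^ 2 := by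
  set v := y - x
  set ψ : ℝ → ℝ := fun t => F (x + t • v) - t * ⟪gradF x, v⟫ - L * t ^ 2 / 2 * ‖v‖ ^ 2
  have hψ : ∀ t : ℝ,
      HasDerivAt ψ (⟪gradF (x + t • v), v⟫ - ⟪gradF x, v⟫ - L * t * ‖v‖ ^ 2) t := by
    intro t
    have hquad : HasDerivAt (fun t : ℝ => L * t ^ 2 / 2 * ‖v‖ ^ 2) (L * t * ‖v‖ ^ 2) t := by
      refine (((hasDerivAt_pow 2 t).const_mul L).div_const 2).mul_const (‖v‖ ^ 2)
        |>.congr_deriv ?_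
      simp only [Nat.cast_ofNat, Nat.reduceSub, pow_one]
      ring
    exact (((hdiff _).hasDerivAt_comp_add_smul).sub
      ((hasDerivAt_id t).mul_const ⟪gradF x, v⟫)).sub hquad |>.congr_deriv (by simp)
  have hψ_nonpos : ∀ t ∈ Set.Icc (0 : ℝ) 1,
      ⟪gradF (x + t • v), v⟫ - ⟪gradF x, v⟫ - L * t * ‖v‖ ^ 2 ≤ 0 := fun t ht => by
    linarith [inner_sub_left (𝕜 := ℝ) (gradF (x + t • v)) (gradF x) v,
      inner_gradient_add_smul_sub_le hsmooth x v ht.1]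
  have hanti : AntitoneOn ψ (Set.Icc 0 1) :=
    antitoneOn_of_deriv_nonpos (convex_Icc 0 1)
      (fun t _ => (hψ t).continuousAt.continuousWithinAt)
      (fun t _ => (hψ t).differentiableAt.differentiableWithinAt)
      (fun t ht => by
        rw [interior_Icc] at ht
        rw [(hψ t).deriv]
        exact hψ_nonpos t (Set.Ioo_subset_Icc_self ht))
  have hψ01 := hanti (Set.left_mem_Icc.mpr zero_le_one) (Set.right_mem_Icc.mpr zero_le_one)
    zero_le_one
  simp only [ψ, v, one_smul, add_sub_cancel, zero_smul, add_zero] at hψ01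
  linarith

lemma sub_convex_combination_le_inner_gradient {F : E → ℝ} {gradF : E → E} {L α : ℝ}
    (hdiff : ∀ x, HasGradientAt F (gradF x) x) (hconv : ConvexOn ℝ Set.univ F)
    (hsmooth : ∀ x y, ‖gradF x - gradF y‖ ≤ L * ‖x - y‖) (hα : α ∈ Set.Icc (0 : ℝ) 1)
    (zag zk zhalf w : E) :
    F ((1 - α) • zag + α • zhalf) - (1 - α) * F zag - α * F w
      ≤ α * ⟪gradF ((1 - α) • zag + α • zk), zhalf - w⟫ + L * α ^ 2 / 2 * ‖zhalf - zk‖ ^ 2 := by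
  set zmd := (1 - α) • zag + α • zk
  set g := gradF zmd
  have hdescent := le_add_inner_gradient_add_sq hdiff hsmooth zmd ((1 - α) • zag + α • zhalf)
  have hstep : (1 - α) • zag + α • zhalf - zmd = α • (zhalf - zk) := by module
  rw [hstep, real_inner_smul_right, norm_smul, mul_pow, Real.norm_eq_abs, sq_abs] at hdescent
  have hag := mul_le_mul_of_nonneg_left (hconv.add_inner_gradient_le (hdiff zmd) zag)
    (sub_nonneg.mpr hα.2)
  have hw := mul_le_mul_of_nonneg_left (hconv.add_inner_gradient_le (hdiff zmd) w) hα.1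
  have hlinear : α * ⟪g, zhalf - zk⟫ - (1 - α) * ⟪g, zag - zmd⟫ - α * ⟪g, w - zmd⟫
      = α * ⟪g, zhalf - w⟫ := by
    simp only [← real_inner_smul_right, ← inner_sub_right]
    congr 1
    module
  linarith

theorem stmt_2_general {n : ℕ} (F : EuclideanSpace ℝ (Fin n) → ℝ)
    (gradF H : EuclideanSpace ℝ (Fin n) → EuclideanSpace ℝ (Fin n))
    (L : ℝ)
    (hdiff : ∀ x, HasGradientAt F (gradF x) x)
    (hconv : ConvexOn ℝ Set.univ F)
    (hsmooth : ∀ x y, ‖gradF x - gradF y‖ ≤ L * ‖x - y‖)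
    (hmono : ∀ u v, 0 ≤ ⟪H u - H v, u - v⟫)
    (α : ℝ) (hα : α ∈ Set.Ioc (0:ℝ) 1)
    (zag zmd zhalf zk w : EuclideanSpace ℝ (Fin n))
    (hmd : zmd = (1 - α) • zag + α • zk)
    (V : EuclideanSpace ℝ (Fin n) → EuclideanSpace ℝ (Fin n) → ℝ)
    (hV : ∀ z w', V z w' = F z - F w' + ⟪H w', z - w'⟫) :
    V ((1 - α) • zag + α • zhalf) w - (1 - α) * V zag w
      ≤ α * ⟪gradF zmd + H zhalf, zhalf - w⟫ + L * α^2 / 2 * ‖zhalf - zk‖^2 := by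
  have hsmoothPart := sub_convex_combination_le_inner_gradient hdiff hconv hsmooth
    (Set.Ioc_subset_Icc_self hα) zag zk zhalf w
  have hHpart : ⟪H w, (1 - α) • zag + α • zhalf - w⟫ - (1 - α) * ⟪H w, zag - w⟫
      = α * ⟪H w, zhalf - w⟫ := by
    rw [show (1 - α) • zag + α • zhalf - w = (1 - α) • (zag - w) + α • (zhalf - w) by module,
      inner_add_right, real_inner_smul_right, real_inner_smul_right]
    ring
  have hHmono : α * ⟪H w, zhalf - w⟫ ≤ α * ⟪H zhalf, zhalf - w⟫ := by
    have := hmono zhalf w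
    rw [inner_sub_left, sub_nonneg] at this
    exact mul_le_mul_of_nonneg_left this hα.1.le
  rw [hV, hV, hmd, inner_add_left, mul_add]
  linarith

/-- Lemma C.2 (one-step gap estimate for AG-OG): for convex `L`-smooth `F`,
monotone `H`, and the Nesterov-style combination step. -/
theorem stmt_2 {n : ℕ} (F : EuclideanSpace ℝ (Fin n) → ℝ)
    (gradF H : EuclideanSpace ℝ (Fin n) → EuclideanSpace ℝ (Fin n))
    (L : ℝ) (hL : 0 < L)
    (hdiff : ∀ x, HasGradientAt F (gradF x) x)
    (hconv : ConvexOn ℝ Set.univ F)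
    (hsmooth : ∀ x y, ‖gradF x - gradF y‖ ≤ L * ‖x - y‖)
    (hmono : ∀ u v, 0 ≤ ⟪H u - H v, u - v⟫)
    (α : ℝ) (hα : α ∈ Set.Ioc (0:ℝ) 1)
    (zag zmd zhalf zk w : EuclideanSpace ℝ (Fin n))
    (hmd : zmd = (1 - α) • zag + α • zk)
    (V : EuclideanSpace ℝ (Fin n) → EuclideanSpace ℝ (Fin n) → ℝ)
    (hV : ∀ z w', V z w' = F z - F w' + ⟪H w', z - w'⟫) :
    V ((1 - α) • zag + α • zhalf) w - (1 - α) * V zag w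
      ≤ α * ⟪gradF zmd + H zhalf, zhalf - w⟫ + L * α^2 / 2 * ‖zhalf - zk‖^2 :=
  stmt_2_general F gradF H L hdiff hconv hsmooth hmono α hα zag zmd zhalf zk w hmd V hV
end

section
/- Let H : ℝⁿ → ℝⁿ be a monotone L_H-Lipschitz map with H(z*) = 0. Consider the OGDA iteration z_{k+1/2} = z_k - η H(z_{k-1/2}), z_{k+1} = z_k - η H(z_{k+1/2}) with constant stepsize η ≤ 1/(2 L_H) and initialization z_{-1/2} = z_{-3/2} = z_0. Then for all K ≥ 0, ‖z_{K+1} - z*‖² + (1/4)‖z_{K+1/2} - z_{K-1/2}‖² ≤ ‖z_K - z*‖² + (1/4)‖z_{K-1/2} - z_{K-3/2}‖²; consequently ‖z_K - z*‖ ≤ ‖z_0 - z*‖ for all K. -/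
/-!
Monotonicity of `H` at `z_{k+1/2}` against `z*` gives
`‖z_{k+1} - z*‖² ≤ ‖z_k - z*‖² + η²‖H(z_{k+1/2}) - H(z_{k-1/2})‖² - η²‖H(z_{k-1/2})‖²`.
Since `z_{k+1/2} - z_{k-1/2} = η (H(z_{k-3/2}) - 2 H(z_{k-1/2}))`, the parallelogram law turns
`½‖z_{k+1/2} - z_{k-1/2}‖² - η²‖H(z_{k-1/2})‖²` into at most `η²‖H(z_{k-1/2}) - H(z_{k-3/2})‖²`,
and both squared differences of `H` are absorbed by the `¼`-weighted step lengths because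
`η L_H ≤ ½`. The initialization makes the second Lyapunov term vanish at `k = 0`.
-/

open RealInnerProductSpace

lemma mul_le_half_of_le_one_div_two_mul {η L : ℝ} (hη0 : 0 ≤ η) (hη : η ≤ 1 / (2 * L)) :
    η * L ≤ 1 / 2 := by
  rcases le_or_gt L 0 with hL | hL
  · nlinarith
  · have := (le_div_iff₀ (by positivity : 0 < 2 * L)).mp hη
    linarith

section OGDA

variable {E : Type*} [NormedAddCommGroup E] {H : E → E} {η : ℝ}

lemma sq_mul_norm_sub_le_of_lipschitz {L : ℝ} (hLip : ∀ u v, ‖H u - H v‖ ≤ L * ‖u - v‖)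
    (hη0 : 0 ≤ η) (hηL : η * L ≤ 1 / 2) (u v : E) :
    η ^ 2 * ‖H u - H v‖ ^ 2 ≤ 1 / 4 * ‖u - v‖ ^ 2 := by
  have h : η * ‖H u - H v‖ ≤ 1 / 2 * ‖u - v‖ :=
    calc η * ‖H u - H v‖ ≤ η * (L * ‖u - v‖) := mul_le_mul_of_nonneg_left (hLip u v) hη0
      _ = (η * L) * ‖u - v‖ := by ring
      _ ≤ 1 / 2 * ‖u - v‖ := mul_le_mul_of_nonneg_right hηL (norm_nonneg _)
  have := pow_le_pow_left₀ (by positivity) h 2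
  rw [mul_pow, mul_pow] at this
  linarith

variable [InnerProductSpace ℝ E]

lemma norm_sub_two_smul_sq (x y : E) :
    ‖x - (2 : ℝ) • y‖ ^ 2 = 2 * ‖x - y‖ ^ 2 + 2 * ‖y‖ ^ 2 - ‖x‖ ^ 2 := by
  have h := parallelogram_law_with_norm ℝ (x - y) y
  rw [sub_add_cancel, sub_sub, ← two_smul ℝ y] at h
  nlinarith [h]

lemma norm_extragradient_step_sub_sq_le (hmono : ∀ u v, 0 ≤ ⟪H u - H v, u - v⟫)
    {zs : E} (hzs : H zs = 0) (hη0 : 0 ≤ η) (z v : E) :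
    ‖z - η • H (z - η • H v) - zs‖ ^ 2 ≤
      ‖z - zs‖ ^ 2 + η ^ 2 * ‖H (z - η • H v) - H v‖ ^ 2 - η ^ 2 * ‖H v‖ ^ 2 := by
  set g := H (z - η • H v)
  have hmono' : η * ⟪g, H v⟫ ≤ ⟪g, z - zs⟫ := by
    have h := hmono (z - η • H v) zs
    rw [hzs, sub_zero, sub_right_comm, inner_sub_right, real_inner_smul_right] at h
    linarith
  have hstep : z - η • g - zs = (z - zs) - η • g := sub_right_comm _ _ _
  rw [hstep, norm_sub_sq_real (z - zs), norm_sub_sq_real g, real_inner_smul_right, norm_smul,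
    Real.norm_eq_abs, abs_of_nonneg hη0, real_inner_comm]
  nlinarith [mul_le_mul_of_nonneg_left hmono' hη0]

/-- The OGDA step from `z_k` with past half-iterates `w₀ = z_{k-3/2}`, `w₁ = z_{k-1/2}`. -/
theorem ogda_lyapunov_step (hmono : ∀ u v, 0 ≤ ⟪H u - H v, u - v⟫)
    {L : ℝ} (hLip : ∀ u v, ‖H u - H v‖ ≤ L * ‖u - v‖) {zs : E} (hzs : H zs = 0)
    (hη0 : 0 ≤ η) (hηL : η * L ≤ 1 / 2) {z w₀ w₁ : E}
    (hw : z - η • H w₁ - w₁ = η • (H w₀ - (2 : ℝ) • H w₁)) :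
    ‖z - η • H (z - η • H w₁) - zs‖ ^ 2 + 1 / 4 * ‖z - η • H w₁ - w₁‖ ^ 2 ≤
      ‖z - zs‖ ^ 2 + 1 / 4 * ‖w₁ - w₀‖ ^ 2 := by
  have hdesc := norm_extragradient_step_sub_sq_le hmono hzs hη0 z w₁
  have hlip₂ := sq_mul_norm_sub_le_of_lipschitz hLip hη0 hηL (z - η • H w₁) w₁
  have hlip₁ := sq_mul_norm_sub_le_of_lipschitz hLip hη0 hηL w₁ w₀
  have hlen : ‖z - η • H w₁ - w₁‖ ^ 2 =
      η ^ 2 * (2 * ‖H w₁ - H w₀‖ ^ 2 + 2 * ‖H w₁‖ ^ 2 - ‖H w₀‖ ^ 2) := by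
    rw [hw, norm_smul, mul_pow, Real.norm_eq_abs, sq_abs, norm_sub_two_smul_sq, norm_sub_rev]
  nlinarith [sq_nonneg η, sq_nonneg ‖H w₀‖]

lemma ogda_half_iterate_sub {z zh : ℕ → E} (h0 : zh 0 = z 0) (h1 : zh 1 = z 0)
    (hhalf : ∀ k, zh (k + 2) = z k - η • H (zh (k + 1)))
    (hfull : ∀ k, z (k + 1) = z k - η • H (zh (k + 2))) (k : ℕ) :
    zh (k + 2) - zh (k + 1) = η • (H (zh k) - (2 : ℝ) • H (zh (k + 1))) := by
  cases k with
  | zero =>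
    rw [hhalf 0, h1, h0]
    module
  | succ k =>
    rw [hhalf (k + 1), hfull k, hhalf k]
    module

end OGDA

theorem stmt_13_general {n : ℕ} (H : EuclideanSpace ℝ (Fin n) → EuclideanSpace ℝ (Fin n))
    (LH η : ℝ)
    (hmono : ∀ u v, 0 ≤ ⟪H u - H v, u - v⟫)
    (hLip : ∀ u v, ‖H u - H v‖ ≤ LH * ‖u - v‖)
    (zs : EuclideanSpace ℝ (Fin n)) (hzs : H zs = 0)
    (hη0 : 0 ≤ η) (hη : η ≤ 1 / (2 * LH))
    (z zh : ℕ → EuclideanSpace ℝ (Fin n))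
    (h0 : zh 0 = z 0) (h1 : zh 1 = z 0)
    (hhalf : ∀ k, zh (k + 2) = z k - η • H (zh (k + 1)))
    (hfull : ∀ k, z (k + 1) = z k - η • H (zh (k + 2))) :
    (∀ K, ‖z (K + 1) - zs‖^2 + (1/4) * ‖zh (K + 2) - zh (K + 1)‖^2
        ≤ ‖z K - zs‖^2 + (1/4) * ‖zh (K + 1) - zh K‖^2) ∧
    (∀ K, ‖z K - zs‖ ≤ ‖z 0 - zs‖) := by
  have hηL := mul_le_half_of_le_one_div_two_mul hη0 hη
  have step : ∀ K, ‖z (K + 1) - zs‖^2 + (1/4) * ‖zh (K + 2) - zh (K + 1)‖^2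
      ≤ ‖z K - zs‖^2 + (1/4) * ‖zh (K + 1) - zh K‖^2 := fun K => by
    have hw := ogda_half_iterate_sub h0 h1 hhalf hfull K
    rw [hhalf K] at hw
    rw [hfull K, hhalf K]
    exact ogda_lyapunov_step hmono hLip hzs hη0 hηL hw
  refine ⟨step, fun K => ?_⟩
  have hlyap : ‖z K - zs‖ ^ 2 + 1 / 4 * ‖zh (K + 1) - zh K‖ ^ 2 ≤
      ‖z 0 - zs‖ ^ 2 + 1 / 4 * ‖zh 1 - zh 0‖ ^ 2 :=
    antitone_nat_of_succ_le (f := fun K => ‖z K - zs‖ ^ 2 + 1 / 4 * ‖zh (K + 1) - zh K‖ ^ 2)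
      step (Nat.zero_le K)
  rw [h0, h1, sub_self, norm_zero] at hlyap
  have hsq : ‖z K - zs‖ ^ 2 ≤ ‖z 0 - zs‖ ^ 2 := by nlinarith [sq_nonneg ‖zh (K + 1) - zh K‖]
  exact (pow_le_pow_iff_left₀ (norm_nonneg _) (norm_nonneg _) two_ne_zero).mp hsq

/-- Lemma B.1 (last-iterate nonexpansiveness of OGDA): with `zh 0 = z_{-3/2}`,
`zh 1 = z_{-1/2}`, `zh (k+2) = z_{k+1/2}`, the Lyapunov quantity
`‖z_k - z*‖² + (1/4)‖z_{k-1/2} - z_{k-3/2}‖²` is nonincreasing, and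
`‖z_K - z*‖ ≤ ‖z_0 - z*‖`. -/
theorem stmt_13 {n : ℕ} (H : EuclideanSpace ℝ (Fin n) → EuclideanSpace ℝ (Fin n))
    (LH η : ℝ) (hLH : 0 < LH)
    (hmono : ∀ u v, 0 ≤ ⟪H u - H v, u - v⟫)
    (hLip : ∀ u v, ‖H u - H v‖ ≤ LH * ‖u - v‖)
    (zs : EuclideanSpace ℝ (Fin n)) (hzs : H zs = 0)
    (hη0 : 0 ≤ η) (hη : η ≤ 1 / (2 * LH))
    (z zh : ℕ → EuclideanSpace ℝ (Fin n))
    (h0 : zh 0 = z 0) (h1 : zh 1 = z 0)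
    (hhalf : ∀ k, zh (k + 2) = z k - η • H (zh (k + 1)))
    (hfull : ∀ k, z (k + 1) = z k - η • H (zh (k + 2))) :
    (∀ K, ‖z (K + 1) - zs‖^2 + (1/4) * ‖zh (K + 2) - zh (K + 1)‖^2
        ≤ ‖z K - zs‖^2 + (1/4) * ‖zh (K + 1) - zh K‖^2) ∧
    (∀ K, ‖z K - zs‖ ≤ ‖z 0 - zs‖) :=
  stmt_13_general H LH η hmono hLip zs hzs hη0 hη z zh h0 h1 hhalf hfull
end
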